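/- Let x ∈ ℝ^m have support N := {i : x_i ≠ 0}, let T ⊆ {1,…,m}, Δ := N \ T, Δ_e := T \ N, and y = A x + w with ‖w‖₂ ≤ ε. Assume |N| ≤ S_N, |Δ_e| ≤ S_{Δe}, |Δ| ≤ S_Δ, and that some δ < (√2 − 1)/2 is an (S_N + S_{Δe} + S_Δ)-restricted isometry bound for A. Let x̂ be a modified-CS estimate with known part T from y and let α ≥ 0. (1) If b₁ > α + 8.79ε, then every i ∈ N with |x_i| ≥ b₁ satisfies |x̂_i| > α, i.e., all such elements are detected by the threshold-α support estimate. (2) If α ≥ 8.79ε, then |x̂_i| ≤ α for every i ∉ N; in particular there are no false additions and every element of Δ_e is deleted by the threshold-α support estimate. -/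

import Mathlib

open Finset

attribute [local instance] Classical.propDecidable

/-- Euclidean (ℓ2) norm of a finite real vector. -/
noncomputable def norm2 {k : ℕ} (v : Fin k → ℝ) : ℝ := Real.sqrt (∑ i, v i ^ 2)

/-- ℓ∞ norm (maximum absolute entry) of a finite real vector. -/
noncomputable def normInf {k : ℕ} (v : Fin k → ℝ) : ℝ := ⨆ i, |v i|

/-- Support of a vector, as a finset. -/
noncomputable def spt {k : ℕ} (v : Fin k → ℝ) : Finset (Fin k) :=
  Finset.univ.filter (fun i => v i ≠ 0)

/-- Restriction of a vector to the coordinates indexed by `T` (zero elsewhere). -/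
noncomputable def restr {k : ℕ} (T : Finset (Fin k)) (v : Fin k → ℝ) : Fin k → ℝ :=
  fun i => if i ∈ T then v i else 0

/-- `δ ∈ [0,1)` is an `S`-restricted isometry bound for `A`:
`(1-δ)‖z‖² ≤ ‖Az‖² ≤ (1+δ)‖z‖²` for every `z` with at most `S` nonzero entries. -/
def RIPBound {n m : ℕ} (A : Matrix (Fin n) (Fin m) ℝ) (S : ℕ) (δ : ℝ) : Prop :=
  0 ≤ δ ∧ δ < 1 ∧
    ∀ z : Fin m → ℝ, (spt z).card ≤ S →
      (1 - δ) * (∑ i, z i ^ 2) ≤ (∑ j, (A.mulVec z) j ^ 2) ∧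
      (∑ j, (A.mulVec z) j ^ 2) ≤ (1 + δ) * (∑ i, z i ^ 2)

/-- `θ ≥ 0` is an `(S,S')`-restricted orthogonality bound for `A`:
`|⟨Az, Az'⟩| ≤ θ‖z‖‖z'‖` for all `z, z'` with disjoint supports of cardinalities `≤ S, S'`. -/
def ROBound {n m : ℕ} (A : Matrix (Fin n) (Fin m) ℝ) (S S' : ℕ) (θ : ℝ) : Prop :=
  0 ≤ θ ∧
    ∀ z z' : Fin m → ℝ, Disjoint (spt z) (spt z') →
      (spt z).card ≤ S → (spt z').card ≤ S' →
      |∑ j, (A.mulVec z) j * (A.mulVec z') j| ≤ θ * norm2 z * norm2 z'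

/-- A modified-CS estimate with known part `T`: feasible and with minimal ℓ1 norm outside `T`
among all feasible vectors. -/
def ModCS {n m : ℕ} (A : Matrix (Fin n) (Fin m) ℝ) (y : Fin n → ℝ) (ε : ℝ)
    (T : Finset (Fin m)) (xhat : Fin m → ℝ) : Prop :=
  norm2 (fun j => y j - (A.mulVec xhat) j) ≤ ε ∧
    ∀ β : Fin m → ℝ, norm2 (fun j => y j - (A.mulVec β) j) ≤ ε →
      ∑ i ∈ Tᶜ, |xhat i| ≤ ∑ i ∈ Tᶜ, |β i|

/-- The LS estimate on `T` from `y`: supported on `T` and satisfying the normal equations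
`A_Tᵀ (y - A x̂) = 0` (equivalently `x̂_T = (A_Tᵀ A_T)⁻¹ A_Tᵀ y` when `A_T` has
full column rank). -/
def IsLS {n m : ℕ} (A : Matrix (Fin n) (Fin m) ℝ) (y : Fin n → ℝ)
    (T : Finset (Fin m)) (xhat : Fin m → ℝ) : Prop :=
  (∀ i, i ∉ T → xhat i = 0) ∧
    ∀ i ∈ T, (∑ j, A j i * (y j - (A.mulVec xhat) j)) = 0

/-- `C₁(δ) = 4√(1+δ)/(1-(√2+1)δ)`. -/
noncomputable def C1 (δ : ℝ) : ℝ := 4 * Real.sqrt (1 + δ) / (1 - (Real.sqrt 2 + 1) * δ)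

/-- `C₂(δ) = 2(1+(√2-1)δ)/(1-(√2+1)δ)`. -/
noncomputable def C2 (δ : ℝ) : ℝ := 2 * (1 + (Real.sqrt 2 - 1) * δ) / (1 - (Real.sqrt 2 + 1) * δ)

/-!
Write `h = x̂ - x`, `N = spt x`, `Δ = N \ T`. Since `x` and `x̂` are both feasible, `‖A h‖₂ ≤ 2ε`
(tube constraint), and the `ℓ¹`-minimality of `x̂` outside `T` gives
`‖h_{(T ∪ N)ᶜ}‖₁ ≤ ‖h_Δ‖₁` (cone constraint). As in Candès' proof of the RIP error bound for
basis pursuit, split `(T ∪ N)ᶜ` into blocks of `|Δ|` entries of decreasing magnitude. By the cone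
constraint the blocks after the first have `ℓ²` norms summing to at most `‖h_{T ∪ N}‖₂`, and
restricted orthogonality bounds the part `u` of `h` on `T ∪ N` and the first block by
`(1 - (√2 + 1)δ)‖u‖₂ ≤ 2√(1 + δ) ε`. Hence `‖h‖₂ ≤ 2‖u‖₂ ≤ C₁(δ) ε < 8.79 ε`, which bounds every
`|x̂ᵢ - xᵢ|`; both claims follow from this entrywise bound.
-/

open Matrix

section Vectors

variable {k : ℕ}

theorem norm2_eq_norm (v : Fin k → ℝ) : norm2 v = ‖WithLp.toLp 2 v‖ := by
  simp [norm2, EuclideanSpace.norm_eq]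

theorem norm2_zero : norm2 (0 : Fin k → ℝ) = 0 := by
  simp [norm2]

theorem norm2_nonneg (v : Fin k → ℝ) : 0 ≤ norm2 v := Real.sqrt_nonneg _

theorem sq_norm2 (v : Fin k → ℝ) : norm2 v ^ 2 = ∑ i, v i ^ 2 :=
  Real.sq_sqrt (sum_nonneg fun _ _ => sq_nonneg _)

theorem sq_norm2_eq_dotProduct (v : Fin k → ℝ) : norm2 v ^ 2 = v ⬝ᵥ v := by
  rw [sq_norm2]
  simp only [dotProduct, sq]

theorem sq_norm2_add (u v : Fin k → ℝ) :
    norm2 (u + v) ^ 2 = norm2 u ^ 2 + norm2 v ^ 2 + 2 * (u ⬝ᵥ v) := by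
  simp only [sq_norm2_eq_dotProduct, add_dotProduct, dotProduct_add, dotProduct_comm v u]
  ring

theorem sq_norm2_sub (u v : Fin k → ℝ) :
    norm2 (u - v) ^ 2 = norm2 u ^ 2 + norm2 v ^ 2 - 2 * (u ⬝ᵥ v) := by
  simp only [sq_norm2_eq_dotProduct, sub_dotProduct, dotProduct_sub, dotProduct_comm v u]
  ring

theorem norm2_add_le (u v : Fin k → ℝ) : norm2 (u + v) ≤ norm2 u + norm2 v := by
  simpa only [norm2_eq_norm, WithLp.toLp_add] using norm_add_le _ _

theorem norm2_sub_le (u v : Fin k → ℝ) : norm2 (u - v) ≤ norm2 u + norm2 v := by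
  simpa only [norm2_eq_norm, WithLp.toLp_sub] using norm_sub_le _ _

theorem norm2_sum_le {ι : Type*} (s : Finset ι) (w : ι → Fin k → ℝ) :
    norm2 (∑ j ∈ s, w j) ≤ ∑ j ∈ s, norm2 (w j) := by
  have hsum : WithLp.toLp 2 (∑ j ∈ s, w j) = ∑ j ∈ s, WithLp.toLp 2 (w j) :=
    map_sum (WithLp.linearEquiv 2 ℝ (Fin k → ℝ)).symm _ _
  simpa only [norm2_eq_norm, hsum] using norm_sum_le s fun j => WithLp.toLp 2 (w j)

theorem norm2_smul (c : ℝ) (v : Fin k → ℝ) : norm2 (c • v) = |c| * norm2 v := by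
  simp only [norm2_eq_norm, WithLp.toLp_smul, norm_smul, Real.norm_eq_abs]

theorem norm2_pos {v : Fin k → ℝ} (hv : v ≠ 0) : 0 < norm2 v := by
  simpa [norm2_eq_norm] using hv

theorem abs_le_norm2 (v : Fin k → ℝ) (i : Fin k) : |v i| ≤ norm2 v := by
  simpa [norm2_eq_norm] using PiLp.norm_apply_le (WithLp.toLp 2 v) i

theorem dotProduct_le_norm2_mul (u v : Fin k → ℝ) : u ⬝ᵥ v ≤ norm2 u * norm2 v :=
  Real.sum_mul_le_sqrt_mul_sqrt univ u v

theorem norm2_restr (s : Finset (Fin k)) (v : Fin k → ℝ) :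
    norm2 (restr s v) = √(∑ i ∈ s, v i ^ 2) := by
  simp [norm2, restr, ite_pow, sum_ite_mem]

theorem mem_spt {v : Fin k → ℝ} {i : Fin k} : i ∈ spt v ↔ v i ≠ 0 := by
  simp [spt]

theorem notMem_spt {v : Fin k → ℝ} {i : Fin k} : i ∉ spt v ↔ v i = 0 := by
  simp [spt]

theorem spt_restr (s : Finset (Fin k)) (v : Fin k → ℝ) : spt (restr s v) = s ∩ spt v := by
  ext i
  by_cases hi : i ∈ s <;> simp [mem_spt, restr, hi]

theorem spt_restr_subset (s : Finset (Fin k)) (v : Fin k → ℝ) : spt (restr s v) ⊆ s := by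
  rw [spt_restr]
  exact inter_subset_left

theorem spt_add_subset (u v : Fin k → ℝ) : spt (u + v) ⊆ spt u ∪ spt v := by
  intro i
  simp only [mem_union, mem_spt, Pi.add_apply]
  contrapose!
  rintro ⟨hu, hv⟩
  simp [hu, hv]

theorem spt_sub_subset (u v : Fin k → ℝ) : spt (u - v) ⊆ spt u ∪ spt v := by
  intro i
  simp only [mem_union, mem_spt, Pi.sub_apply]
  contrapose!
  rintro ⟨hu, hv⟩
  simp [hu, hv]

theorem spt_smul {c : ℝ} (hc : c ≠ 0) (v : Fin k → ℝ) : spt (c • v) = spt v := by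
  ext i
  simp [mem_spt, hc]

theorem restr_add_restr_compl (s : Finset (Fin k)) (v : Fin k → ℝ) :
    restr s v + restr sᶜ v = v := by
  ext i
  by_cases hi : i ∈ s <;> simp [restr, hi]

theorem sum_abs_restr (s : Finset (Fin k)) (v : Fin k → ℝ) :
    ∑ i, |restr s v i| = ∑ i ∈ s, |v i| := by
  simp [restr, apply_ite, sum_ite_mem]

theorem dotProduct_eq_zero_of_disjoint {u v : Fin k → ℝ} (h : Disjoint (spt u) (spt v)) :
    u ⬝ᵥ v = 0 := by
  refine sum_eq_zero fun i _ => ?_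
  by_cases hu : u i = 0
  · simp [hu]
  · simp [notMem_spt.1 (disjoint_left.1 h (mem_spt.2 hu))]

theorem sq_norm2_add_of_disjoint {u v : Fin k → ℝ} (h : Disjoint (spt u) (spt v)) :
    norm2 (u + v) ^ 2 = norm2 u ^ 2 + norm2 v ^ 2 := by
  rw [sq_norm2_add, dotProduct_eq_zero_of_disjoint h, mul_zero, add_zero]

theorem norm2_add_norm2_le_of_disjoint {u v : Fin k → ℝ} (h : Disjoint (spt u) (spt v)) :
    norm2 u + norm2 v ≤ √2 * norm2 (u + v) := by
  have hsq := sq_norm2_add_of_disjoint h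
  have h2 : √2 ^ 2 = 2 := Real.sq_sqrt zero_le_two
  refine le_of_pow_le_pow_left₀ two_ne_zero (mul_nonneg (Real.sqrt_nonneg 2) (norm2_nonneg _)) ?_
  rw [mul_pow, h2, hsq]
  nlinarith [sq_nonneg (norm2 u - norm2 v)]

theorem norm2_restr_le {s : Finset (Fin k)} {v : Fin k → ℝ} {M : ℝ} (hM0 : 0 ≤ M)
    (hM : ∀ i ∈ s, |v i| ≤ M) : norm2 (restr s v) ≤ √(s.card) * M := by
  rw [norm2_restr, ← Real.sqrt_sq hM0, ← Real.sqrt_mul (Nat.cast_nonneg _)]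
  refine Real.sqrt_le_sqrt ?_
  calc ∑ i ∈ s, v i ^ 2 ≤ ∑ _i ∈ s, M ^ 2 :=
        sum_le_sum fun i hi => by
          rw [← sq_abs]
          exact pow_le_pow_left₀ (abs_nonneg _) (hM i hi) 2
    _ = s.card * M ^ 2 := by simp

theorem sum_abs_le_sqrt_card_mul_norm2_restr (s : Finset (Fin k)) (v : Fin k → ℝ) :
    ∑ i ∈ s, |v i| ≤ √(s.card) * norm2 (restr s v) := by
  simpa [norm2_restr] using Real.sum_mul_le_sqrt_mul_sqrt s (fun _ => (1 : ℝ)) fun i => |v i|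

theorem norm2_restr_mono {s t : Finset (Fin k)} (hst : s ⊆ t) (v : Fin k → ℝ) :
    norm2 (restr s v) ≤ norm2 (restr t v) := by
  rw [norm2_restr, norm2_restr]
  exact Real.sqrt_le_sqrt (sum_le_sum_of_subset_of_nonneg hst fun _ _ _ => sq_nonneg _)

theorem norm2_le_norm2_add_of_disjoint {u v : Fin k → ℝ} (h : Disjoint (spt u) (spt v)) :
    norm2 u ≤ norm2 (u + v) := by
  refine le_of_pow_le_pow_left₀ two_ne_zero (norm2_nonneg _) ?_
  rw [sq_norm2_add_of_disjoint h]
  linarith [sq_nonneg (norm2 v)]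

end Vectors

theorem Finset.exists_subset_card_eq_forall_mem_sdiff_le {ι : Type*} [DecidableEq ι]
    (f : ι → ℝ) (s : Finset ι) {k : ℕ} (hk : k ≤ s.card) :
    ∃ D ⊆ s, D.card = k ∧ ∀ a ∈ D, ∀ b ∈ s \ D, f b ≤ f a := by
  induction k with
  | zero => exact ⟨∅, empty_subset _, card_empty, by simp⟩
  | succ k ih =>
    obtain ⟨D, hDs, hDk, hD⟩ := ih (Nat.le_of_succ_le hk)
    have hne : (s \ D).Nonempty := by
      rw [← card_pos, card_sdiff_of_subset hDs]
      omega
    obtain ⟨b₀, hb₀, hmax⟩ := exists_max_image (s \ D) f hne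
    refine ⟨insert b₀ D, insert_subset (mem_sdiff.1 hb₀).1 hDs, ?_, fun a ha b hb => ?_⟩
    · rw [card_insert_of_notMem (mem_sdiff.1 hb₀).2, hDk]
    have hb' : b ∈ s \ D := by
      simp only [mem_sdiff, mem_insert, not_or] at hb ⊢
      exact ⟨hb.1, hb.2.2⟩
    rcases mem_insert.1 ha with rfl | ha
    · exact hmax b hb'
    · exact hD a ha b hb'

section Decomposition

variable {m : ℕ}

theorem exists_largest_entries (v : Fin m → ℝ) (k : ℕ) :
    ∃ D ⊆ spt v, D.card = min k (spt v).card ∧ ∀ i ∉ D, k * |v i| ≤ ∑ a ∈ D, |v a| := by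
  obtain ⟨D, hDv, hDcard, hD⟩ := (spt v).exists_subset_card_eq_forall_mem_sdiff_le
    (fun i => |v i|) (min_le_right k _)
  refine ⟨D, hDv, hDcard, fun i hi => ?_⟩
  by_cases hiv : i ∈ spt v
  · have hk : D.card = k := by
      have := card_lt_card (ssubset_of_subset_of_ne hDv (by rintro rfl; exact hi hiv))
      omega
    calc k * |v i| = ∑ _a ∈ D, |v i| := by simp [hk]
      _ ≤ ∑ a ∈ D, |v a| := sum_le_sum fun a ha => hD a ha i (mem_sdiff.2 ⟨hiv, hi⟩)
  · rw [notMem_spt.1 hiv, abs_zero, mul_zero]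
    exact sum_nonneg fun _ _ => abs_nonneg _

/-- Every entry of a block is at most the mean magnitude over the previous block (the first
over `D`), so `√k ‖w j‖₂` is at most the `ℓ¹` norm of the previous block. -/
theorem exists_head_tail_decomposition {k : ℕ} (hk : 0 < k) (v : Fin m → ℝ) :
    ∃ D ⊆ spt v, D.card ≤ k ∧ ∃ (r : ℕ) (w : Fin r → Fin m → ℝ),
      v = restr D v + ∑ j, w j ∧ (∀ j, spt (w j) ⊆ spt v \ D ∧ (spt (w j)).card ≤ k) ∧
      √k * ∑ j, norm2 (w j) ≤ ∑ i, |v i| := by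
  induction hN : (spt v).card using Nat.strong_induction_on generalizing v with
  | _ N ih =>
  rcases eq_or_ne v 0 with rfl | hv
  · exact ⟨∅, empty_subset _, by simp, 0, Fin.elim0, by ext i; simp [restr],
      fun j => j.elim0, by simp⟩
  obtain ⟨D, hDv, hDcard, hD⟩ := exists_largest_entries v k
  have hDpos : 0 < D.card := by
    obtain ⟨i, hi⟩ := Function.ne_iff.1 hv
    rw [hDcard]
    exact lt_min hk (card_pos.2 ⟨i, mem_spt.2 hi⟩)
  set v' := restr Dᶜ v
  have hspt' : spt v' = spt v \ D := by
    rw [spt_restr, sdiff_eq_inter_compl, inter_comm]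
  obtain ⟨D', hD'v', hD'k, r, w, hv', hw, hwsum⟩ := ih _ (by
    rw [← hN, hspt', card_sdiff_of_subset hDv]
    omega) v' rfl
  set M := (∑ a ∈ D, |v a|) / k
  have hk' : (0 : ℝ) < k := Nat.cast_pos.2 hk
  have hM : ∀ i, |v' i| ≤ M := by
    intro i
    by_cases hi : i ∈ D
    · simp only [v', restr, mem_compl, hi, not_true_eq_false, if_false, abs_zero]
      positivity
    · simp only [v', restr, mem_compl, hi, not_false_eq_true, if_true]
      rw [le_div_iff₀ hk', mul_comm]
      exact hD i hi
  have hhead : √k * norm2 (restr D' v') ≤ ∑ a ∈ D, |v a| :=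
    calc √k * norm2 (restr D' v') ≤ √k * (√D'.card * M) := by
          gcongr
          exact norm2_restr_le (by positivity) fun i _ => hM i
      _ ≤ √k * (√k * M) := by gcongr
      _ = ∑ a ∈ D, |v a| := by
          rw [← mul_assoc, Real.mul_self_sqrt hk'.le, mul_div_cancel₀ _ hk'.ne']
  refine ⟨D, hDv, hDcard ▸ min_le_left _ _, r + 1, Fin.cons (restr D' v') w, ?_, ?_, ?_⟩
  · rw [Fin.sum_cons, ← hv']
    exact (restr_add_restr_compl D v).symm
  · refine Fin.cases ?_ fun j => ?_
    · rw [Fin.cons_zero, spt_restr, ← hspt']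
      exact ⟨inter_subset_left.trans hD'v', (card_le_card inter_subset_left).trans hD'k⟩
    · rw [Fin.cons_succ]
      exact ⟨(hw j).1.trans (sdiff_subset.trans hspt'.le), (hw j).2⟩
  · rw [Fin.sum_univ_succ, Fin.cons_zero]
    simp only [Fin.cons_succ]
    rw [mul_add, ← sum_add_sum_compl D fun i => |v i|, ← sum_abs_restr Dᶜ v]
    exact add_le_add hhead hwsum

end Decomposition

theorem exists_head_tail_decomposition_of_sum_abs_le {m k : ℕ} {v : Fin m → ℝ} {c : ℝ}
    (hc : 0 ≤ c) (hv : ∑ i, |v i| ≤ √k * c) :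
    ∃ D ⊆ spt v, D.card ≤ k ∧ ∃ (r : ℕ) (w : Fin r → Fin m → ℝ),
      v = restr D v + ∑ j, w j ∧ (∀ j, spt (w j) ⊆ spt v \ D ∧ (spt (w j)).card ≤ k) ∧
      ∑ j, norm2 (w j) ≤ c := by
  rcases k.eq_zero_or_pos with rfl | hk
  · obtain rfl : v = 0 := by
      ext i
      simpa using (sum_eq_zero_iff_of_nonneg fun i _ => abs_nonneg (v i)).1
        (le_antisymm (by simpa using hv) (sum_nonneg fun _ _ => abs_nonneg _)) i (mem_univ i)
    exact ⟨∅, empty_subset _, by simp, 0, Fin.elim0, by ext i; simp [restr],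
      fun j => j.elim0, by simpa using hc⟩
  obtain ⟨D, hDv, hDk, r, w, hvw, hw, hwsum⟩ := exists_head_tail_decomposition hk v
  exact ⟨D, hDv, hDk, r, w, hvw, hw,
    le_of_mul_le_mul_left (hwsum.trans hv) (Real.sqrt_pos.2 (Nat.cast_pos.2 hk))⟩

section C1

variable {δ : ℝ}

theorem half_lt_one_sub_mul_of_lt (hδ : δ < (√2 - 1) / 2) : 1 / 2 < 1 - (√2 + 1) * δ := by
  have h2 : √2 ^ 2 = 2 := Real.sq_sqrt zero_le_two
  nlinarith [Real.sqrt_nonneg 2]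

/-- The constant `8.79` is the limit `8√((1 + √2)/2) ≈ 8.7895` of `C1 δ` as `δ ↑ (√2 - 1)/2`. -/
theorem C1_lt (hδ : δ < (√2 - 1) / 2) : C1 δ < 8.79 := by
  have h2 : √2 ^ 2 = 2 := Real.sq_sqrt zero_le_two
  have hs : √2 < 1.41422 := by nlinarith [Real.sqrt_nonneg 2]
  have hden := half_lt_one_sub_mul_of_lt hδ
  have hnum : √(1 + δ) ≤ 1.0987 := Real.sqrt_le_iff.2 ⟨by norm_num, by nlinarith⟩
  rw [C1, div_lt_iff₀ (by linarith)]
  linarith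

theorem two_mul_le_C1_mul {q ε : ℝ} (hδ : δ < (√2 - 1) / 2)
    (hq : (1 - (√2 + 1) * δ) * q ≤ 2 * √(1 + δ) * ε) : 2 * q ≤ C1 δ * ε := by
  have hden := half_lt_one_sub_mul_of_lt hδ
  rw [C1, div_mul_eq_mul_div, le_div_iff₀ (by linarith)]
  linarith

end C1

namespace RIPBound

variable {n m S : ℕ} {A : Matrix (Fin n) (Fin m) ℝ} {δ : ℝ}

theorem le_sq_norm2_mulVec (hA : RIPBound A S δ) {z : Fin m → ℝ} (hz : (spt z).card ≤ S) :
    (1 - δ) * norm2 z ^ 2 ≤ norm2 (A *ᵥ z) ^ 2 := by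
  simpa only [sq_norm2] using (hA.2.2 z hz).1

theorem sq_norm2_mulVec_le (hA : RIPBound A S δ) {z : Fin m → ℝ} (hz : (spt z).card ≤ S) :
    norm2 (A *ᵥ z) ^ 2 ≤ (1 + δ) * norm2 z ^ 2 := by
  simpa only [sq_norm2] using (hA.2.2 z hz).2

theorem norm2_mulVec_le (hA : RIPBound A S δ) {z : Fin m → ℝ} (hz : (spt z).card ≤ S) :
    norm2 (A *ᵥ z) ≤ √(1 + δ) * norm2 z := by
  rw [← Real.sqrt_sq (norm2_nonneg (A *ᵥ z)), ← Real.sqrt_sq (norm2_nonneg z),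
    ← Real.sqrt_mul (by linarith [hA.1])]
  exact Real.sqrt_le_sqrt (hA.sq_norm2_mulVec_le hz)

/-- Polarization of the RIP over `z ± z'`, whose squared norms both equal `‖z‖² + ‖z'‖²`. -/
theorem two_mul_abs_dotProduct_le (hA : RIPBound A S δ) {z z' : Fin m → ℝ}
    (hd : Disjoint (spt z) (spt z')) (hS : (spt z).card + (spt z').card ≤ S) :
    2 * |(A *ᵥ z) ⬝ᵥ (A *ᵥ z')| ≤ δ * (norm2 z ^ 2 + norm2 z' ^ 2) := by
  have hcard : ∀ y, spt y ⊆ spt z ∪ spt z' → (spt y).card ≤ S := fun y hy =>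
    (card_le_card hy).trans ((card_union_le _ _).trans hS)
  have hadd := hcard _ (spt_add_subset z z')
  have hsub := hcard _ (spt_sub_subset z z')
  have h0 := dotProduct_eq_zero_of_disjoint hd
  have hp₁ := hA.le_sq_norm2_mulVec hadd
  have hp₂ := hA.sq_norm2_mulVec_le hadd
  have hm₁ := hA.le_sq_norm2_mulVec hsub
  have hm₂ := hA.sq_norm2_mulVec_le hsub
  rw [mulVec_add, sq_norm2_add, sq_norm2_add, h0] at hp₁ hp₂
  rw [mulVec_sub, sq_norm2_sub, sq_norm2_sub, h0] at hm₁ hm₂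
  rcases abs_cases ((A *ᵥ z) ⬝ᵥ (A *ᵥ z')) with ⟨h, -⟩ | ⟨h, -⟩ <;> rw [h] <;> linarith

theorem abs_dotProduct_le (hA : RIPBound A S δ) {z z' : Fin m → ℝ}
    (hd : Disjoint (spt z) (spt z')) (hS : (spt z).card + (spt z').card ≤ S) :
    |(A *ᵥ z) ⬝ᵥ (A *ᵥ z')| ≤ δ * norm2 z * norm2 z' := by
  rcases eq_or_ne z 0 with rfl | hz
  · simp [norm2_zero]
  rcases eq_or_ne z' 0 with rfl | hz'
  · simp [norm2_zero]
  set a := norm2 z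
  set b := norm2 z'
  have ha : 0 < a := norm2_pos hz
  have hb : 0 < b := norm2_pos hz'
  have key := hA.two_mul_abs_dotProduct_le (z := b • z) (z' := a • z')
    (by rwa [spt_smul hb.ne', spt_smul ha.ne']) (by rwa [spt_smul hb.ne', spt_smul ha.ne'])
  rw [mulVec_smul, mulVec_smul, smul_dotProduct, dotProduct_smul, smul_eq_mul, smul_eq_mul,
    norm2_smul, norm2_smul, abs_mul, abs_mul, abs_of_pos ha, abs_of_pos hb] at key
  have hab : 0 < 2 * (b * a) := by positivity
  refine le_of_mul_le_mul_left ?_ hab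
  nlinarith

theorem abs_dotProduct_add_le (hA : RIPBound A S δ) {u₀ u₁ w : Fin m → ℝ}
    (h₀₁ : Disjoint (spt u₀) (spt u₁)) (h₀ : Disjoint (spt u₀) (spt w))
    (h₁ : Disjoint (spt u₁) (spt w)) (hS₀ : (spt u₀).card + (spt w).card ≤ S)
    (hS₁ : (spt u₁).card + (spt w).card ≤ S) :
    |(A *ᵥ (u₀ + u₁)) ⬝ᵥ (A *ᵥ w)| ≤ √2 * δ * norm2 (u₀ + u₁) * norm2 w := by
  rw [mulVec_add, add_dotProduct]
  calc |(A *ᵥ u₀) ⬝ᵥ (A *ᵥ w) + (A *ᵥ u₁) ⬝ᵥ (A *ᵥ w)|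
      ≤ δ * norm2 u₀ * norm2 w + δ * norm2 u₁ * norm2 w :=
        (abs_add_le _ _).trans (add_le_add (hA.abs_dotProduct_le h₀ hS₀)
          (hA.abs_dotProduct_le h₁ hS₁))
    _ = δ * norm2 w * (norm2 u₀ + norm2 u₁) := by ring
    _ ≤ δ * norm2 w * (√2 * norm2 (u₀ + u₁)) :=
        mul_le_mul_of_nonneg_left (norm2_add_norm2_le_of_disjoint h₀₁)
          (mul_nonneg hA.1 (norm2_nonneg w))
    _ = √2 * δ * norm2 (u₀ + u₁) * norm2 w := by ring

theorem mul_norm2_le_of_tube (hA : RIPBound A S δ) {u : Fin m → ℝ} (hu : (spt u).card ≤ S)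
    {r : ℕ} (w : Fin r → Fin m → ℝ) {ε : ℝ} (htube : norm2 (A *ᵥ (u + ∑ j, w j)) ≤ 2 * ε)
    (horth : ∀ j, |(A *ᵥ u) ⬝ᵥ (A *ᵥ w j)| ≤ √2 * δ * norm2 u * norm2 (w j))
    (hw : ∑ j, norm2 (w j) ≤ norm2 u) :
    (1 - (√2 + 1) * δ) * norm2 u ≤ 2 * √(1 + δ) * ε := by
  set q := norm2 u
  have hq : 0 ≤ q := norm2_nonneg u
  have hε : 0 ≤ ε := by linarith [norm2_nonneg (A *ᵥ (u + ∑ j, w j))]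
  have hsplit : norm2 (A *ᵥ u) ^ 2
      = (A *ᵥ u) ⬝ᵥ (A *ᵥ (u + ∑ j, w j)) - ∑ j, (A *ᵥ u) ⬝ᵥ (A *ᵥ w j) := by
    rw [mulVec_add, dotProduct_add, mulVec_sum, dotProduct_sum, sq_norm2_eq_dotProduct]
    ring
  have hmain : (A *ᵥ u) ⬝ᵥ (A *ᵥ (u + ∑ j, w j)) ≤ √(1 + δ) * q * (2 * ε) :=
    (dotProduct_le_norm2_mul _ _).trans
      (mul_le_mul (hA.norm2_mulVec_le hu) htube (norm2_nonneg _) (by positivity))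
  have htail : -∑ j, (A *ᵥ u) ⬝ᵥ (A *ᵥ w j) ≤ √2 * δ * q * q :=
    calc -∑ j, (A *ᵥ u) ⬝ᵥ (A *ᵥ w j) ≤ ∑ j, |(A *ᵥ u) ⬝ᵥ (A *ᵥ w j)| :=
          (neg_le_abs _).trans (abs_sum_le_sum_abs _ _)
      _ ≤ ∑ j, √2 * δ * q * norm2 (w j) := sum_le_sum fun j _ => horth j
      _ ≤ √2 * δ * q * q := by
          rw [← mul_sum]
          exact mul_le_mul_of_nonneg_left hw (by have := hA.1; positivity)
  have hquad : q * ((1 - (√2 + 1) * δ) * q - 2 * √(1 + δ) * ε) ≤ 0 := by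
    nlinarith [hA.le_sq_norm2_mulVec hu]
  rcases hq.eq_or_lt with hq0 | hqpos
  · rw [← hq0, mul_zero]
    positivity
  · nlinarith

theorem norm2_le_C1_mul (hA : RIPBound A S δ) (hδ : δ < (√2 - 1) / 2) {h : Fin m → ℝ}
    {T₀ Δ : Finset (Fin m)} (hΔ : Δ ⊆ T₀) (hS : T₀.card + Δ.card ≤ S) {ε : ℝ}
    (htube : norm2 (A *ᵥ h) ≤ 2 * ε) (hcone : ∑ i ∈ T₀ᶜ, |h i| ≤ ∑ i ∈ Δ, |h i|) :
    norm2 h ≤ C1 δ * ε := by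
  set u₀ := restr T₀ h
  set v := restr T₀ᶜ h
  have hv : ∑ i, |v i| ≤ √Δ.card * norm2 u₀ :=
    calc ∑ i, |v i| = ∑ i ∈ T₀ᶜ, |h i| := sum_abs_restr _ _
      _ ≤ ∑ i ∈ Δ, |h i| := hcone
      _ ≤ √Δ.card * norm2 (restr Δ h) := sum_abs_le_sqrt_card_mul_norm2_restr _ _
      _ ≤ √Δ.card * norm2 u₀ :=
          mul_le_mul_of_nonneg_left (norm2_restr_mono hΔ h) (Real.sqrt_nonneg _)
  obtain ⟨D, hDv, hDk, r, w, hvw, hw, hwsum⟩ :=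
    exists_head_tail_decomposition_of_sum_abs_le (norm2_nonneg u₀) hv
  set u₁ := restr D v
  have hvT : spt v ⊆ T₀ᶜ := spt_restr_subset _ _
  have hu₀ : spt u₀ ⊆ T₀ := spt_restr_subset _ _
  have hu₁ : spt u₁ ⊆ D := spt_restr_subset _ _
  have hDT : Disjoint T₀ D := disjoint_compl_right.mono_right (hDv.trans hvT)
  have hwT : ∀ j, Disjoint T₀ (spt (w j)) := fun j =>
    disjoint_compl_right.mono_right ((hw j).1.trans (sdiff_subset.trans hvT))
  have hwD : ∀ j, Disjoint D (spt (w j)) := fun j => disjoint_sdiff.mono_right (hw j).1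
  have h₀₁ : Disjoint (spt u₀) (spt u₁) := (hDT.mono_left hu₀).mono_right hu₁
  have hh : h = (u₀ + u₁) + ∑ j, w j := by
    rw [add_assoc, ← hvw]
    exact (restr_add_restr_compl T₀ h).symm
  have hu : (spt (u₀ + u₁)).card ≤ S :=
    (card_le_card ((spt_add_subset _ _).trans (union_subset_union hu₀ hu₁))).trans
      ((card_union_le _ _).trans (by omega))
  have horth : ∀ j, |(A *ᵥ (u₀ + u₁)) ⬝ᵥ (A *ᵥ w j)| ≤ √2 * δ * norm2 (u₀ + u₁) * norm2 (w j) :=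
    fun j => hA.abs_dotProduct_add_le h₀₁ ((hwT j).mono_left hu₀) ((hwD j).mono_left hu₁)
      (by have := card_le_card hu₀; have := (hw j).2; omega)
      (by have := card_le_card hu₁; have := (hw j).2; have := card_le_card hΔ; omega)
  have hwu : ∑ j, norm2 (w j) ≤ norm2 (u₀ + u₁) :=
    hwsum.trans (norm2_le_norm2_add_of_disjoint h₀₁)
  have hq := hA.mul_norm2_le_of_tube hu w (by rwa [← hh]) horth hwu
  calc norm2 h = norm2 ((u₀ + u₁) + ∑ j, w j) := congrArg norm2 hh
    _ ≤ norm2 (u₀ + u₁) + ∑ j, norm2 (w j) :=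
        (norm2_add_le _ _).trans (add_le_add le_rfl (norm2_sum_le _ _))
    _ ≤ 2 * norm2 (u₀ + u₁) := by linarith
    _ ≤ C1 δ * ε := two_mul_le_C1_mul hδ hq

end RIPBound

namespace ModCS

variable {n m : ℕ} {A : Matrix (Fin n) (Fin m) ℝ} {y : Fin n → ℝ} {ε : ℝ} {T : Finset (Fin m)}
  {xhat x : Fin m → ℝ}

theorem norm2_mulVec_sub_le (hxhat : ModCS A y ε T xhat)
    (hx : norm2 (fun j => y j - (A *ᵥ x) j) ≤ ε) : norm2 (A *ᵥ (xhat - x)) ≤ 2 * ε := by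
  have hsub : A *ᵥ (xhat - x) = (fun j => y j - (A *ᵥ x) j) - fun j => y j - (A *ᵥ xhat) j := by
    ext j
    simp only [mulVec_sub, Pi.sub_apply]
    ring
  rw [hsub]
  linarith [norm2_sub_le (fun j => y j - (A *ᵥ x) j) fun j => y j - (A *ᵥ xhat) j, hxhat.1]

theorem sum_abs_sub_le (hxhat : ModCS A y ε T xhat)
    (hx : norm2 (fun j => y j - (A *ᵥ x) j) ≤ ε) :
    ∑ i ∈ (T ∪ spt x)ᶜ, |xhat i - x i| ≤ ∑ i ∈ spt x \ T, |xhat i - x i| := by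
  have hsplit : ∀ f : Fin m → ℝ,
      ∑ i ∈ Tᶜ, f i = ∑ i ∈ spt x \ T, f i + ∑ i ∈ (T ∪ spt x)ᶜ, f i := by
    intro f
    rw [← sum_union (disjoint_left.2 fun i hi hi' => by simp_all)]
    congr 1
    ext i
    simp only [mem_compl, mem_union, mem_sdiff]
    tauto
  have hx0 : ∀ i ∈ (T ∪ spt x)ᶜ, x i = 0 := fun i hi =>
    notMem_spt.1 fun h => (mem_compl.1 hi) (mem_union_right T h)
  have hmin := hxhat.2 x hx
  rw [hsplit, hsplit] at hmin
  have hx_out : ∑ i ∈ (T ∪ spt x)ᶜ, |x i| = 0 :=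
    sum_eq_zero fun i hi => by rw [hx0 i hi, abs_zero]
  have hxhat_out : ∑ i ∈ (T ∪ spt x)ᶜ, |xhat i - x i| = ∑ i ∈ (T ∪ spt x)ᶜ, |xhat i| :=
    sum_congr rfl fun i hi => by rw [hx0 i hi, sub_zero]
  have htri : ∑ i ∈ spt x \ T, |x i|
      ≤ ∑ i ∈ spt x \ T, |xhat i| + ∑ i ∈ spt x \ T, |xhat i - x i| := by
    rw [← sum_add_distrib]
    exact sum_le_sum fun i _ => by
      linarith [abs_sub_abs_le_abs_sub (x i) (xhat i), abs_sub_comm (x i) (xhat i)]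
  linarith

end ModCS

theorem modCS_detect_delete_general {n m : ℕ} (A : Matrix (Fin n) (Fin m) ℝ)
    (x : Fin m → ℝ) (w : Fin n → ℝ) (ε δ α b1 : ℝ) (T : Finset (Fin m))
    (SN SΔe SΔ : ℕ)
    (hw : norm2 w ≤ ε)
    (hN : (spt x).card ≤ SN)
    (hΔe : (T \ spt x).card ≤ SΔe)
    (hΔ : (spt x \ T).card ≤ SΔ)
    (hδ : δ < (Real.sqrt 2 - 1) / 2)
    (hRIP : RIPBound A (SN + SΔe + SΔ) δ)
    (xhat : Fin m → ℝ)
    (hxhat : ModCS A (fun j => (A.mulVec x) j + w j) ε T xhat) :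
    (b1 > α + 8.79 * ε → ∀ i ∈ spt x, b1 ≤ |x i| → α < |xhat i|) ∧
    (α ≥ 8.79 * ε → ∀ i, i ∉ spt x → |xhat i| ≤ α) := by
  have hε : 0 ≤ ε := (norm2_nonneg w).trans hw
  have hfeas : norm2 (fun j => (A *ᵥ x) j + w j - (A *ᵥ x) j) ≤ ε := by simpa using hw
  have hcard : (T ∪ spt x).card + (spt x \ T).card ≤ SN + SΔe + SΔ := by
    have : (T ∪ spt x).card ≤ (spt x).card + (T \ spt x).card := by
      rw [union_comm, ← union_sdiff_self_eq_union]
      exact card_union_le _ _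
    omega
  have herr := hRIP.norm2_le_C1_mul hδ (sdiff_subset.trans subset_union_right) hcard
    (hxhat.norm2_mulVec_sub_le hfeas) (hxhat.sum_abs_sub_le hfeas)
  have hlinf : ∀ i, |xhat i - x i| ≤ 8.79 * ε := fun i =>
    (abs_le_norm2 (xhat - x) i).trans (herr.trans (mul_le_mul_of_nonneg_right (C1_lt hδ).le hε))
  refine ⟨fun hb i _ hi => ?_, fun hα i hi => ?_⟩
  · linarith [hlinf i, abs_sub_abs_le_abs_sub (x i) (xhat i), abs_sub_comm (x i) (xhat i)]
  · simpa [notMem_spt.1 hi] using (hlinf i).trans hα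

/-- detection and deletion conditions for modified-CS (Lemma 2). -/
theorem modCS_detect_delete {n m : ℕ} (A : Matrix (Fin n) (Fin m) ℝ)
    (x : Fin m → ℝ) (w : Fin n → ℝ) (ε δ α b1 : ℝ) (T : Finset (Fin m))
    (SN SΔe SΔ : ℕ)
    (hw : norm2 w ≤ ε)
    (hN : (spt x).card ≤ SN)
    (hΔe : (T \ spt x).card ≤ SΔe)
    (hΔ : (spt x \ T).card ≤ SΔ)
    (hδ : δ < (Real.sqrt 2 - 1) / 2)
    (hRIP : RIPBound A (SN + SΔe + SΔ) δ)
    (xhat : Fin m → ℝ)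
    (hxhat : ModCS A (fun j => (A.mulVec x) j + w j) ε T xhat)
    (hα : 0 ≤ α) :
    (b1 > α + 8.79 * ε → ∀ i ∈ spt x, b1 ≤ |x i| → α < |xhat i|) ∧
    (α ≥ 8.79 * ε → ∀ i, i ∉ spt x → |xhat i| ≤ α) :=
  modCS_detect_delete_general A x w ε δ α b1 T SN SΔe SΔ hw hN hΔe hΔ hδ hRIP xhat hxhat
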